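/- Let u and (wⱼ)_{j≥0} be smooth functions of (t,x,y,z,τ) satisfying, for each fixed τ and a fixed index i ≥ 1: the Martínez Alonso–Shabat equation for u; the hierarchy (wⱼ)_y = u_y (w_{j−1})_x − u_{xy} w_{j−1}, (wⱼ)_z = u_z (w_{j−1})_x − (w_{j−1})_t − u_{xz} w_{j−1} for j ≥ 1 with (w₀)_y = (w₀)_z = 0; and the τ-evolution u_τ = wᵢ, (wⱼ)_τ = Σ_{k=0}^{i−1} ( w_{i+j−k−1} (w_k)_x − w_k (w_{i+j−k−1})_x ) for all j ≥ 0. Then the τ-flow preserves the Martínez Alonso–Shabat equation: ∂_τ(u_{ty} − u_z u_{xy} + u_y u_{xz}) = 0, i.e., wᵢ satisfies (wᵢ)_{ty} = u_z (wᵢ)_{xy} − u_y (wᵢ)_{xz} + u_{xy} (wᵢ)_z − u_{xz} (wᵢ)_y. -/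

import Mathlib

/-- Partial derivative of `f : (Fin n → ℝ) → ℝ` in the `i`-th coordinate direction. -/
noncomputable def pd (n : ℕ) (i : Fin n) (f : (Fin n → ℝ) → ℝ) : (Fin n → ℝ) → ℝ :=
  fun p => fderiv ℝ f p (Pi.single i 1)

section Helpers

variable {n : ℕ}

lemma pd_smooth (i : Fin n) {f : (Fin n → ℝ) → ℝ} (hf : ContDiff ℝ (⊤ : ℕ∞) f) :
    ContDiff ℝ (⊤ : ℕ∞) (pd n i f) := by
  have h : pd n i f = fun p =>
      (ContinuousLinearMap.apply ℝ ℝ (Pi.single i (1 : ℝ))) (fderiv ℝ f p) := rfl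
  rw [h]
  exact (ContinuousLinearMap.apply ℝ ℝ _).contDiff.comp (hf.fderiv_right (m := (⊤ : ℕ∞)) (by simp))

lemma pd_comm (i j : Fin n) {f : (Fin n → ℝ) → ℝ} (hf : ContDiff ℝ (⊤ : ℕ∞) f)
    (p : Fin n → ℝ) : pd n i (pd n j f) p = pd n j (pd n i f) p := by
  have hdf : DifferentiableAt ℝ (fderiv ℝ f) p :=
    ((hf.fderiv_right (m := (⊤ : ℕ∞)) (by simp)).differentiable (by simp)) p
  have key : ∀ a b : Fin n, pd n a (pd n b f) p
      = fderiv ℝ (fderiv ℝ f) p (Pi.single a 1) (Pi.single b 1) := by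
    intro a b
    have h := ((ContinuousLinearMap.apply ℝ ℝ (Pi.single b (1 : ℝ))).hasFDerivAt.comp p
        hdf.hasFDerivAt).fderiv
    have h2 : pd n b f
        = (ContinuousLinearMap.apply ℝ ℝ (Pi.single b (1 : ℝ))) ∘ fderiv ℝ f := rfl
    show fderiv ℝ (pd n b f) p (Pi.single a 1) = _
    rw [h2, h]; rfl
  rw [key, key]
  exact second_derivative_symmetric
    (fun q => ((hf.differentiable (by simp)) q).hasFDerivAt) hdf.hasFDerivAt _ _

lemma pd_sub' (i : Fin n) {f g : (Fin n → ℝ) → ℝ} {p : Fin n → ℝ}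
    (hf : DifferentiableAt ℝ f p) (hg : DifferentiableAt ℝ g p) :
    pd n i (fun q => f q - g q) p = pd n i f p - pd n i g p := by
  simp only [pd, fderiv_fun_sub hf hg, ContinuousLinearMap.sub_apply]

lemma pd_add' (i : Fin n) {f g : (Fin n → ℝ) → ℝ} {p : Fin n → ℝ}
    (hf : DifferentiableAt ℝ f p) (hg : DifferentiableAt ℝ g p) :
    pd n i (fun q => f q + g q) p = pd n i f p + pd n i g p := by
  simp only [pd, fderiv_fun_add hf hg, ContinuousLinearMap.add_apply]

lemma pd_mul' (i : Fin n) {f g : (Fin n → ℝ) → ℝ} {p : Fin n → ℝ}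
    (hf : DifferentiableAt ℝ f p) (hg : DifferentiableAt ℝ g p) :
    pd n i (fun q => f q * g q) p = pd n i f p * g p + f p * pd n i g p := by
  simp only [pd, fderiv_fun_mul hf hg, ContinuousLinearMap.add_apply,
    ContinuousLinearMap.smul_apply, smul_eq_mul]
  ring

/-- Expansion of `pd` of `A*B - C*D`. -/
lemma pd_expandA (i : Fin n) (A B C D : (Fin n → ℝ) → ℝ) (p : Fin n → ℝ)
    (hA : ContDiff ℝ (⊤ : ℕ∞) A) (hB : ContDiff ℝ (⊤ : ℕ∞) B) (hC : ContDiff ℝ (⊤ : ℕ∞) C)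
    (hD : ContDiff ℝ (⊤ : ℕ∞) D) :
    pd n i (fun q => A q * B q - C q * D q) p
      = pd n i A p * B p + A p * pd n i B p
        - (pd n i C p * D p + C p * pd n i D p) := by
  have dA := (hA.differentiable (by simp)) p
  have dB := (hB.differentiable (by simp)) p
  have dC := (hC.differentiable (by simp)) p
  have dD := (hD.differentiable (by simp)) p
  rw [pd_sub' i (dA.fun_mul dB) (dC.fun_mul dD), pd_mul' i dA dB, pd_mul' i dC dD]

/-- Expansion of `pd` of `A*B - M - C*D`. -/
lemma pd_expandB (i : Fin n) (A B M C D : (Fin n → ℝ) → ℝ) (p : Fin n → ℝ)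
    (hA : ContDiff ℝ (⊤ : ℕ∞) A) (hB : ContDiff ℝ (⊤ : ℕ∞) B) (hM : ContDiff ℝ (⊤ : ℕ∞) M)
    (hC : ContDiff ℝ (⊤ : ℕ∞) C) (hD : ContDiff ℝ (⊤ : ℕ∞) D) :
    pd n i (fun q => A q * B q - M q - C q * D q) p
      = pd n i A p * B p + A p * pd n i B p - pd n i M p
        - (pd n i C p * D p + C p * pd n i D p) := by
  have dA := (hA.differentiable (by simp)) p
  have dB := (hB.differentiable (by simp)) p
  have dM := (hM.differentiable (by simp)) p
  have dC := (hC.differentiable (by simp)) p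
  have dD := (hD.differentiable (by simp)) p
  rw [pd_sub' i ((dA.fun_mul dB).fun_sub dM) (dC.fun_mul dD),
    pd_sub' i (dA.fun_mul dB) dM, pd_mul' i dA dB, pd_mul' i dC dD]

/-- Expansion of `pd` of `F - A*B + C*D`. -/
lemma pd_expandC (i : Fin n) (F A B C D : (Fin n → ℝ) → ℝ) (p : Fin n → ℝ)
    (hF : ContDiff ℝ (⊤ : ℕ∞) F) (hA : ContDiff ℝ (⊤ : ℕ∞) A) (hB : ContDiff ℝ (⊤ : ℕ∞) B)
    (hC : ContDiff ℝ (⊤ : ℕ∞) C) (hD : ContDiff ℝ (⊤ : ℕ∞) D) :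
    pd n i (fun q => F q - A q * B q + C q * D q) p
      = pd n i F p - (pd n i A p * B p + A p * pd n i B p)
        + (pd n i C p * D p + C p * pd n i D p) := by
  have dF := (hF.differentiable (by simp)) p
  have dA := (hA.differentiable (by simp)) p
  have dB := (hB.differentiable (by simp)) p
  have dC := (hC.differentiable (by simp)) p
  have dD := (hD.differentiable (by simp)) p
  rw [pd_add' i (dF.fun_sub (dA.fun_mul dB)) (dC.fun_mul dD),
    pd_sub' i dF (dA.fun_mul dB), pd_mul' i dA dB, pd_mul' i dC dD]

end Helpers

/-- 5D coordinates `(t,x,y,z,τ) = (0,1,2,3,4)`. Given the Martínez Alonso–Shabat equation,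
the hierarchy for the `wⱼ`, and the `τ`-evolution `u_τ = wᵢ`,
`(wⱼ)_τ = Σ_{k<i}(w_{i+j−k−1}(w_k)_x − w_k (w_{i+j−k−1})_x)`, the flow preserves the
equation: `∂_τ(u_ty − u_z u_xy + u_y u_xz) = 0`, and `wᵢ` satisfies the linearized
equation. -/
theorem stmt_15 (u : (Fin 5 → ℝ) → ℝ) (w : ℕ → (Fin 5 → ℝ) → ℝ) (i : ℕ) (hi : 1 ≤ i)
    (hu : ContDiff ℝ (⊤ : ℕ∞) u) (hw : ∀ j, ContDiff ℝ (⊤ : ℕ∞) (w j))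
    (hMASh : ∀ p, pd 5 2 (pd 5 0 u) p
        = pd 5 3 u p * pd 5 2 (pd 5 1 u) p - pd 5 2 u p * pd 5 3 (pd 5 1 u) p)
    (hy : ∀ j : ℕ, 1 ≤ j → ∀ p, pd 5 2 (w j) p
        = pd 5 2 u p * pd 5 1 (w (j - 1)) p - pd 5 2 (pd 5 1 u) p * w (j - 1) p)
    (hz : ∀ j : ℕ, 1 ≤ j → ∀ p, pd 5 3 (w j) p
        = pd 5 3 u p * pd 5 1 (w (j - 1)) p - pd 5 0 (w (j - 1)) p
          - pd 5 3 (pd 5 1 u) p * w (j - 1) p)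
    (h0y : ∀ p, pd 5 2 (w 0) p = 0) (h0z : ∀ p, pd 5 3 (w 0) p = 0)
    (htu : ∀ p, pd 5 4 u p = w i p)
    (htw : ∀ j : ℕ, ∀ p, pd 5 4 (w j) p
        = ∑ k ∈ Finset.range i,
            (w (i + j - k - 1) p * pd 5 1 (w k) p
              - w k p * pd 5 1 (w (i + j - k - 1)) p)) :
    (∀ p, pd 5 4
        (fun r => pd 5 2 (pd 5 0 u) r - pd 5 3 u r * pd 5 2 (pd 5 1 u) r
            + pd 5 2 u r * pd 5 3 (pd 5 1 u) r) p = 0) ∧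
    (∀ p, pd 5 2 (pd 5 0 (w i)) p
        = pd 5 3 u p * pd 5 2 (pd 5 1 (w i)) p - pd 5 2 u p * pd 5 3 (pd 5 1 (w i)) p
          + pd 5 2 (pd 5 1 u) p * pd 5 3 (w i) p
          - pd 5 3 (pd 5 1 u) p * pd 5 2 (w i) p) := by
  have sv : ContDiff ℝ (⊤ : ℕ∞) (w (i - 1)) := hw (i - 1)
  have s0u : ContDiff ℝ (⊤ : ℕ∞) (pd 5 0 u) := pd_smooth 0 hu
  have s1u : ContDiff ℝ (⊤ : ℕ∞) (pd 5 1 u) := pd_smooth 1 hu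
  have s2u : ContDiff ℝ (⊤ : ℕ∞) (pd 5 2 u) := pd_smooth 2 hu
  have s3u : ContDiff ℝ (⊤ : ℕ∞) (pd 5 3 u) := pd_smooth 3 hu
  have s21u : ContDiff ℝ (⊤ : ℕ∞) (pd 5 2 (pd 5 1 u)) := pd_smooth 2 s1u
  have s31u : ContDiff ℝ (⊤ : ℕ∞) (pd 5 3 (pd 5 1 u)) := pd_smooth 3 s1u
  have s1v : ContDiff ℝ (⊤ : ℕ∞) (pd 5 1 (w (i - 1))) := pd_smooth 1 sv
  have s0v : ContDiff ℝ (⊤ : ℕ∞) (pd 5 0 (w (i - 1))) := pd_smooth 0 sv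
  have hW2 : pd 5 2 (w i)
      = fun q => pd 5 2 u q * pd 5 1 (w (i - 1)) q - pd 5 2 (pd 5 1 u) q * w (i - 1) q :=
    funext (hy i hi)
  have hW3 : pd 5 3 (w i)
      = fun q => pd 5 3 u q * pd 5 1 (w (i - 1)) q - pd 5 0 (w (i - 1)) q
          - pd 5 3 (pd 5 1 u) q * w (i - 1) q :=
    funext (hz i hi)
  have hEfun : pd 5 2 (pd 5 0 u)
      = fun q => pd 5 3 u q * pd 5 2 (pd 5 1 u) q - pd 5 2 u q * pd 5 3 (pd 5 1 u) q :=
    funext hMASh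
  -- the linearized equation for `w i`
  have key : ∀ p, pd 5 2 (pd 5 0 (w i)) p
      = pd 5 3 u p * pd 5 2 (pd 5 1 (w i)) p - pd 5 2 u p * pd 5 3 (pd 5 1 (w i)) p
        + pd 5 2 (pd 5 1 u) p * pd 5 3 (w i) p
        - pd 5 3 (pd 5 1 u) p * pd 5 2 (w i) p := by
    intro p
    -- the `x`-derivative of the MASh equation, rewritten with commuted derivatives
    have hx : pd 5 0 (pd 5 2 (pd 5 1 u)) p
        = pd 5 1 (pd 5 3 u) p * pd 5 2 (pd 5 1 u) p
          + pd 5 3 u p * pd 5 1 (pd 5 2 (pd 5 1 u)) p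
          - (pd 5 1 (pd 5 2 u) p * pd 5 3 (pd 5 1 u) p
            + pd 5 2 u p * pd 5 1 (pd 5 3 (pd 5 1 u)) p) := by
      have step1 : pd 5 0 (pd 5 2 (pd 5 1 u)) p = pd 5 1 (pd 5 2 (pd 5 0 u)) p := by
        rw [pd_comm 0 2 s1u p]
        have h01 : pd 5 0 (pd 5 1 u) = pd 5 1 (pd 5 0 u) := funext (pd_comm 0 1 hu)
        rw [h01]
        exact pd_comm 2 1 s0u p
      rw [step1, hEfun, pd_expandA 1 _ _ _ _ p s3u s21u s2u s31u]
    rw [pd_comm 2 0 (hw i) p, pd_comm 2 1 (hw i) p, pd_comm 3 1 (hw i) p]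
    simp only [hW2, hW3]
    rw [pd_expandA 0 _ _ _ _ p s2u s1v s21u sv,
      pd_expandA 1 _ _ _ _ p s2u s1v s21u sv,
      pd_expandB 1 _ _ _ _ _ p s3u s1v s0v s31u sv]
    rw [hx, pd_comm 0 2 hu p, hMASh p, pd_comm 1 2 hu p, pd_comm 1 3 hu p,
      pd_comm 1 0 sv p]
    ring
  refine ⟨?_, key⟩
  intro p
  have h4u : pd 5 4 u = w i := funext htu
  have h40 : pd 5 4 (pd 5 0 u) = pd 5 0 (w i) := by
    funext q; rw [pd_comm 4 0 hu q, h4u]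
  have h41 : pd 5 4 (pd 5 1 u) = pd 5 1 (w i) := by
    funext q; rw [pd_comm 4 1 hu q, h4u]
  have c1 : pd 5 4 (pd 5 2 (pd 5 0 u)) p = pd 5 2 (pd 5 0 (w i)) p := by
    rw [pd_comm 4 2 s0u p, h40]
  have c2 : pd 5 4 (pd 5 3 u) p = pd 5 3 (w i) p := by
    rw [pd_comm 4 3 hu p, h4u]
  have c3 : pd 5 4 (pd 5 2 (pd 5 1 u)) p = pd 5 2 (pd 5 1 (w i)) p := by
    rw [pd_comm 4 2 s1u p, h41]
  have c4 : pd 5 4 (pd 5 2 u) p = pd 5 2 (w i) p := by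
    rw [pd_comm 4 2 hu p, h4u]
  have c5 : pd 5 4 (pd 5 3 (pd 5 1 u)) p = pd 5 3 (pd 5 1 (w i)) p := by
    rw [pd_comm 4 3 s1u p, h41]
  rw [pd_expandC 4 _ _ _ _ _ p (pd_smooth 2 s0u) s3u s21u s2u s31u,
    c1, c2, c3, c4, c5, key p]
  ring
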